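/- arXiv:1801.00153 — 9 statements merged into one kernel-verified Lean document; each statement's English description precedes it below -/
import Mathlib

section
/- Every submonoid H of the natural numbers with gcd of its elements equal to 1 has finite complement in ℕ, i.e. all sufficiently large natural numbers belong to H. -/
theorem stmt_0 (H : Set ℕ) (h0 : 0 ∈ H)
    (hadd : ∀ a ∈ H, ∀ b ∈ H, a + b ∈ H)
    (hgcd : ∀ d : ℕ, (∀ h ∈ H, d ∣ h) → d = 1) :
    ∃ N : ℕ, ∀ n ≥ N, n ∈ H := by
  -- multiples of elements of H are in H
  have hsmul : ∀ (k a : ℕ), a ∈ H → k * a ∈ H := by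
    intro k a ha
    induction k with
    | zero => simpa using h0
    | succ n ih => rw [Nat.succ_mul]; exact hadd _ ih _ ha
  -- the subgroup of ℤ generated by H
  set S : AddSubgroup ℤ := AddSubgroup.closure ((↑) '' H) with hS
  obtain ⟨g, hg⟩ := Int.subgroup_cyclic S
  have hdvd : ∀ h ∈ H, g.natAbs ∣ h := by
    intro h hh
    have : (h : ℤ) ∈ S := AddSubgroup.subset_closure ⟨h, hh, rfl⟩
    rw [hg, AddSubgroup.mem_closure_singleton] at this
    obtain ⟨n, hn⟩ := this
    have : g ∣ (h : ℤ) := ⟨n, by rw [← hn, smul_eq_mul]; ring⟩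
    simpa using Int.natAbs_dvd_natAbs.mpr this
  have hg1 : g.natAbs = 1 := hgcd _ hdvd
  have hone : (1 : ℤ) ∈ S := by
    rw [hg]
    rcases Int.natAbs_eq_iff.mp hg1 with h1 | h1
    · simpa [h1] using AddSubgroup.mem_closure_singleton_self g
    · have := AddSubgroup.neg_mem (AddSubgroup.closure {g})
        (AddSubgroup.mem_closure_singleton_self g)
      simpa [h1] using this
  -- 1 = a - b with a b ∈ H
  have key : ∃ a ∈ H, ∃ b ∈ H, (1 : ℤ) = (a : ℤ) - b := by
    rw [hS] at hone
    refine AddSubgroup.closure_induction ?_ ?_ ?_ ?_ hone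
    · rintro x ⟨a, ha, rfl⟩
      exact ⟨a, ha, 0, h0, by simp⟩
    · exact ⟨0, h0, 0, h0, by simp⟩
    · rintro x y _ _ ⟨a, ha, b, hb, rfl⟩ ⟨c, hc, d, hd, rfl⟩
      exact ⟨a + c, hadd a ha c hc, b + d, hadd b hb d hd, by push_cast; ring⟩
    · rintro x _ ⟨a, ha, b, hb, rfl⟩
      exact ⟨b, hb, a, ha, by ring⟩
  obtain ⟨a, ha, b, hb, hab⟩ := key
  have hab' : a = b + 1 := by
    have : (a : ℤ) = (b : ℤ) + 1 := by linarith
    exact_mod_cast this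
  subst hab'
  -- now b ∈ H and b+1 ∈ H
  rcases Nat.eq_zero_or_pos b with rfl | hbpos
  · exact ⟨0, fun n _ => by simpa using hsmul n 1 (by simpa using ha)⟩
  refine ⟨b * b, fun n hn => ?_⟩
  have hrb : n % b < b := Nat.mod_lt _ hbpos
  have hbq : b ≤ n / b := (Nat.le_div_iff_mul_le hbpos).mpr hn
  have hqr : n % b ≤ n / b := le_trans (Nat.le_of_lt hrb) hbq
  obtain ⟨k, hk⟩ := Nat.le.dest hqr
  have hnqr : n = (n % b) * (b + 1) + k * b := by
    have h1 : b * (n / b) + n % b = n := Nat.div_add_mod n b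
    rw [← hk] at h1
    calc n = b * (n % b + k) + n % b := h1.symm
      _ = (n % b) * (b + 1) + k * b := by ring
  rw [hnqr]
  exact hadd _ (hsmul _ _ ha) _ (hsmul _ _ hb)
end

section
/- For any numerical semigroup H with H ≠ ℕ, the type of H satisfies type(H) < mult(H), where type(H) = |PF(H)| and mult(H) is the smallest nonzero element of H. -/
def NumSgp (H : Set ℕ) : Prop :=
  0 ∈ H ∧ (∀ a ∈ H, ∀ b ∈ H, a + b ∈ H) ∧ ∃ N : ℕ, ∀ n ≥ N, n ∈ H

def MemZ (H : Set ℕ) (x : ℤ) : Prop := ∃ n ∈ H, (n : ℤ) = x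

def PFZ (H : Set ℕ) : Set ℤ :=
  {x | ¬ MemZ H x ∧ ∀ h ∈ H, h ≠ 0 → MemZ H (x + h)}

theorem stmt_4 (H : Set ℕ) (hH : NumSgp H) (hne : H ≠ Set.univ)
    (m : ℕ) (hm : m ∈ H) (hm0 : m ≠ 0) (hmin : ∀ h ∈ H, h ≠ 0 → m ≤ h) :
    (PFZ H).Finite ∧ (PFZ H).ncard < m := by
  obtain ⟨h0, hadd, N, hN⟩ := hH
  have hmpos : (0 : ℤ) < (m : ℤ) := by exact_mod_cast Nat.pos_of_ne_zero hm0
  -- multiples of m are in H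
  have hmul : ∀ k : ℕ, k ≠ 0 → k * m ∈ H := by
    intro k hk
    induction k with
    | zero => simp at hk
    | succ n ih =>
      rcases eq_or_ne n 0 with h | h
      · simpa [h] using hm
      · have := hadd _ (ih h) _ hm
        simpa [Nat.succ_mul] using this
  -- every element of PFZ H has nonzero residue mod m
  have key : ∀ x ∈ PFZ H, x % (m : ℤ) ≠ 0 := by
    intro x hx hx0
    obtain ⟨hnm, hpf⟩ := hx
    obtain ⟨q, hq⟩ := Int.dvd_of_emod_eq_zero hx0
    rcases lt_trichotomy q 0 with hq0 | hq0 | hq0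
    · -- x negative; x + m ∈ H as integer forces x = -m
      have hxm : MemZ H (x + m) := hpf m hm hm0
      obtain ⟨n, hn, hneq⟩ := hxm
      have hnval : (n : ℤ) = (q + 1) * m := by rw [hneq, hq]; ring
      have hq1 : q + 1 ≤ 0 := hq0
      have hn0 : (n : ℤ) ≤ 0 := by
        rw [hnval]
        exact mul_nonpos_of_nonpos_of_nonneg hq1 hmpos.le
      have hnz : n = 0 := by omega
      have hxeq : x = -(m : ℤ) := by
        have h1 : (q + 1) * m = 0 := by rw [← hnval, hnz]; simp
        have hq1' : q + 1 = 0 := by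
          rcases mul_eq_zero.mp h1 with h | h
          · exact h
          · exact absurd h hmpos.ne'
        rw [hq]; nlinarith
      -- so every nonzero element of H, minus m, is in H
      have hdesc : ∀ h ∈ H, h ≠ 0 → m ≤ h ∧ h - m ∈ H := by
        intro h hh hh0
        obtain ⟨n, hn, hneq⟩ := hpf h hh hh0
        rw [hxeq] at hneq
        have hle : m ≤ h := by omega
        have hne' : n = h - m := by omega
        exact ⟨hle, hne' ▸ hn⟩
      -- all elements of H divisible by m
      have hdvd : ∀ n : ℕ, n ∈ H → m ∣ n := by
        intro n
        induction n using Nat.strong_induction_on with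
        | _ n ih =>
          intro hn
          rcases eq_or_ne n 0 with h | h
          · simp [h]
          · obtain ⟨hle, hmem⟩ := hdesc n hn h
            have hlt : n - m < n := by omega
            have := ih (n - m) hlt hmem
            have h2 := Nat.dvd_add this (dvd_refl m)
            rwa [Nat.sub_add_cancel hle] at h2
      have h1 : m ∣ m * N + 1 :=
        hdvd _ (hN _ (by nlinarith [Nat.one_le_iff_ne_zero.mpr hm0]))
      have hm1 : m = 1 := by
        have : m ∣ 1 := (Nat.dvd_add_right ⟨N, rfl⟩).mp h1
        exact Nat.dvd_one.mp this
      -- then H = ℕ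
      apply hne
      ext n
      simp only [Set.mem_univ, iff_true]
      induction n with
      | zero => exact h0
      | succ k ihk => exact hadd _ ihk _ (hm1 ▸ hm)
    · exact hnm ⟨0, h0, by simp [hq, hq0]⟩
    · refine hnm ⟨q.toNat * m, hmul q.toNat (by omega), ?_⟩
      push_cast
      rw [Int.toNat_of_nonneg hq0.le, hq]; ring
  -- the map x ↦ x % m is injective on PFZ H
  have main : ∀ a b : ℤ, a ∈ PFZ H → b ∈ PFZ H →
      a % (m : ℤ) = b % (m : ℤ) → a < b → False := by
    intro a b ha hb hab hlt
    have h0' : (b - a) % (m : ℤ) = 0 := by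
      rw [Int.sub_emod, hab]; simp
    obtain ⟨q, hq⟩ := Int.dvd_of_emod_eq_zero h0'
    have hq0 : 0 < q := by nlinarith
    have hknz : q.toNat * m ≠ 0 := by
      apply Nat.mul_ne_zero _ hm0
      omega
    obtain ⟨n, hn, hneq⟩ := ha.2 (q.toNat * m) (hmul q.toNat (by omega)) hknz
    apply hb.1
    refine ⟨n, hn, ?_⟩
    have hcast : ((q.toNat * m : ℕ) : ℤ) = b - a := by
      push_cast
      rw [Int.toNat_of_nonneg hq0.le, hq]; ring
    rw [hneq, hcast]; ring
  have hinj : Set.InjOn (fun x => x % (m : ℤ)) (PFZ H) := by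
    intro x hx y hy hxy
    rcases lt_trichotomy x y with h | h | h
    · exact absurd (main x y hx hy hxy h) (fun h => h)
    · exact h
    · exact absurd (main y x hy hx hxy.symm h) (fun h => h)
  -- image lands in Ioo 0 m
  have hsub : (fun x => x % (m : ℤ)) '' PFZ H ⊆ ↑(Finset.Ioo (0 : ℤ) m) := by
    rintro _ ⟨x, hx, rfl⟩
    simp only [Finset.coe_Ioo, Set.mem_Ioo]
    constructor
    · exact lt_of_le_of_ne (Int.emod_nonneg x (by omega)) (Ne.symm (key x hx))
    · exact Int.emod_lt_of_pos x hmpos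
  have himgfin : ((fun x => x % (m : ℤ)) '' PFZ H).Finite :=
    (Finset.finite_toSet _).subset hsub
  have hfin : (PFZ H).Finite := Set.Finite.of_finite_image himgfin hinj
  refine ⟨hfin, ?_⟩
  have h1 : (PFZ H).ncard = ((fun x => x % (m : ℤ)) '' PFZ H).ncard :=
    (Set.ncard_image_of_injOn hinj).symm
  have h2 : ((fun x => x % (m : ℤ)) '' PFZ H).ncard ≤ (Finset.Ioo (0 : ℤ) (m : ℤ)).card := by
    rw [← Set.ncard_coe_finset]
    exact Set.ncard_le_ncard hsub (Finset.finite_toSet _)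
  have h3 : (Finset.Ioo (0 : ℤ) (m : ℤ)).card = m - 1 := by
    rw [Int.card_Ioo]
    omega
  omega
end

section
/- For any numerical semigroup H with H ≠ ℕ, one has (type(H) + 1) · n(H) ≥ F(H) + 1, where n(H) is the number of elements of H smaller than the Frobenius number F(H). -/
private lemma ncard_prod_aux {α β : Type*} {s : Set α} {t : Set β}
    (hs : s.Finite) (ht : t.Finite) : (s ×ˢ t).ncard = s.ncard * t.ncard := by
  rw [Set.ncard_eq_toFinset_card s hs, Set.ncard_eq_toFinset_card t ht,
    ← Finset.card_product,
    show s ×ˢ t = ↑(hs.toFinset ×ˢ ht.toFinset) by simp [Finset.coe_product],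
    Set.ncard_coe_finset]

theorem stmt_5 (H : Set ℕ) (hH : NumSgp H) (hne : H ≠ Set.univ)
    (F : ℕ) (hF : F ∉ H ∧ ∀ n : ℕ, F < n → n ∈ H) :
    F + 1 ≤ ((PFZ H).ncard + 1) * {h ∈ H | h < F}.ncard := by
  classical
  obtain ⟨h0, hadd, -⟩ := hH
  obtain ⟨hFn, hFb⟩ := hF
  -- every non-element is ≤ F
  have hle : ∀ x : ℕ, x ∉ H → x ≤ F := fun x hx => by
    by_contra h; exact hx (hFb x (by omega))
  set S : Set ℕ := {h ∈ H | h < F} with hS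
  set G : Set ℕ := {x : ℕ | x ∉ H} with hG
  have hSfin : S.Finite := (Set.finite_Iio F).subset (fun x hx => hx.2)
  have hGfin : G.Finite := (Set.finite_Iic F).subset (fun x hx => hle x hx)
  have hPfin : (PFZ H).Finite := by
    apply (Set.finite_Icc (0 : ℤ) F).subset
    rintro x ⟨hx1, hx2⟩
    constructor
    · by_contra hneg
      push_neg at hneg
      have hh : F + (-x).toNat ∈ H := hFb _ (by omega)
      obtain ⟨n, hnH, hnx⟩ := hx2 _ hh (by omega)
      have : (n : ℤ) = F := by push_cast at hnx ⊢; omega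
      have : n = F := by omega
      exact hFn (this ▸ hnH)
    · by_contra hgt
      push_neg at hgt
      exact hx1 ⟨x.toNat, hFb _ (by omega), by omega⟩
  -- key: each gap maps to (f, s) with f ∈ PFZ, s ∈ S, x + s = f
  have key : ∀ x ∈ G, ∃ f s : ℕ, (f : ℤ) ∈ PFZ H ∧ s ∈ S ∧ x + s = f := by
    intro x hx
    have hx' : x ∉ H := hx
    have hxF : x ≤ F := hle x hx'
    set P : ℕ → Prop := fun f => f ∉ H ∧ x ≤ f ∧ f - x ∈ H with hP
    have hPx : P x := ⟨hx', le_refl x, by simpa using h0⟩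
    set f := Nat.findGreatest P F with hf
    have hxpos : 0 < x := by
      rcases Nat.eq_zero_or_pos x with h | h
      · exact absurd (h ▸ h0) hx'
      · exact h
    have hPf : P f := Nat.findGreatest_spec (m := x) hxF hPx
    have hfF : f ≤ F := Nat.findGreatest_le F
    obtain ⟨hfH, hxlef, hfxH⟩ := hPf
    have hfPFZ : (f : ℤ) ∈ PFZ H := by
      constructor
      · rintro ⟨n, hnH, hn⟩
        have : n = f := by omega
        exact hfH (this ▸ hnH)
      · intro h hhH hh0
        by_contra hmem
        have hfhH : f + h ∉ H := fun hc => hmem ⟨f + h, hc, by push_cast; ring⟩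
        have hfhF : f + h ≤ F := hle _ hfhH
        refine Nat.findGreatest_is_greatest (by omega : f < f + h) hfhF
          ⟨hfhH, by omega, ?_⟩
        have : f + h - x = (f - x) + h := by omega
        rw [this]
        exact hadd _ hfxH _ hhH
    refine ⟨f, f - x, hfPFZ, ⟨hfxH, by omega⟩, by omega⟩
  -- injection from G into PFZ ×ˢ S
  choose! ff ss hff hss hsum using key
  have hGcard : G.ncard ≤ (PFZ H).ncard * S.ncard := by
    have := Set.ncard_le_ncard_of_injOn (s := G) (t := (PFZ H) ×ˢ S)
      (fun x => ((ff x : ℤ), ss x))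
      (fun x hx => ⟨hff x hx, hss x hx⟩)
      (fun a ha b hb hab => by
        have h1 := hsum a ha
        have h2 := hsum b hb
        have hf : (ff a : ℤ) = ff b := congrArg Prod.fst hab
        have hs : ss a = ss b := congrArg Prod.snd hab
        omega)
      (hPfin.prod hSfin)
    rwa [ncard_prod_aux hPfin hSfin] at this
  -- partition of Iic F
  have hpart : Set.Iic F = G ∪ S := by
    ext x
    simp only [Set.mem_Iic, Set.mem_union, hG, hS, Set.mem_setOf_eq, Set.mem_sep_iff]
    constructor
    · intro hxF
      by_cases hxH : x ∈ H
      · right; exact ⟨hxH, lt_of_le_of_ne hxF (fun h => hFn (h ▸ hxH))⟩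
      · left; exact hxH
    · rintro (h | h)
      · exact hle x h
      · omega
  have hdisj : Disjoint G S := by
    rw [Set.disjoint_left]
    intro x hxG hxS
    exact hxG hxS.1
  have hIic : (Set.Iic F).ncard = F + 1 := by
    rw [show Set.Iic F = ↑(Finset.Iic F) by simp, Set.ncard_coe_finset,
      Nat.card_Iic]
  have hsplit : F + 1 = G.ncard + S.ncard := by
    rw [← hIic, hpart, Set.ncard_union_eq hdisj hGfin hSfin]
  have hSpos : 1 ≤ S.ncard := by
    have hF0 : 0 < F := by
      rcases Nat.eq_zero_or_pos F with h | h
      · exact absurd (h ▸ h0) hFn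
      · exact h
    have : (0 : ℕ) ∈ S := ⟨h0, hF0⟩
    have := Set.ncard_pos hSfin |>.mpr ⟨0, this⟩; omega
  calc F + 1 = G.ncard + S.ncard := hsplit
    _ ≤ (PFZ H).ncard * S.ncard + S.ncard := by omega
    _ = ((PFZ H).ncard + 1) * S.ncard := by ring
end

section
/- A numerical semigroup H is symmetric (i.e., for every integer x, either x ∈ H or F(H) − x ∈ H) if and only if type(H) = 1, i.e. PF(H) = {F(H)}. -/
theorem stmt_6 (H : Set ℕ) (hH : NumSgp H) (hne : H ≠ Set.univ)
    (F : ℤ) (hF : ¬ MemZ H F ∧ ∀ y : ℤ, F < y → MemZ H y) :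
    (∀ x : ℤ, MemZ H x ∨ MemZ H (F - x)) ↔ PFZ H = {F} := by
  classical
  obtain ⟨h0, hadd, _⟩ := hH
  have hFPF : F ∈ PFZ H := by
    refine ⟨hF.1, fun h hh hne0 => hF.2 _ ?_⟩
    have : (0:ℤ) < (h:ℤ) := by exact_mod_cast Nat.pos_of_ne_zero hne0
    linarith
  constructor
  · intro hsym
    ext z
    simp only [Set.mem_singleton_iff]
    constructor
    · intro hz
      by_contra hne'
      rcases hsym z with hm | hm
      · exact hz.1 hm
      · obtain ⟨n, hn, hnz⟩ := hm
        rcases Nat.eq_zero_or_pos n with h0' | hpos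
        · apply hne'
          subst h0'
          simp at hnz
          linarith
        · apply hF.1
          have hzn : z + (n:ℤ) = F := by linarith
          rw [← hzn]
          exact hz.2 n hn (by omega)
    · intro h; subst h; exact hFPF
  · intro hPF x
    by_contra hc
    push_neg at hc
    obtain ⟨hx, hFx⟩ := hc
    set P : ℕ → Prop := fun n => n ∈ H ∧ ¬ MemZ H (x + n) with hPdef
    set B : ℕ := (F - x).toNat with hB
    have hP0 : P 0 := ⟨h0, by simpa using hx⟩
    set k := Nat.findGreatest P B with hk
    have hPk : P k := Nat.findGreatest_spec (Nat.zero_le B) hP0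
    have hxkF : x + (k:ℤ) ≤ F := by
      by_contra hgt; push_neg at hgt
      exact hPk.2 (hF.2 _ hgt)
    have hkPF : (x + (k:ℤ)) ∈ PFZ H := by
      refine ⟨hPk.2, fun h hh hne0 => ?_⟩
      by_contra hmem
      have hle : x + (k:ℤ) + (h:ℤ) ≤ F := by
        by_contra hgt; push_neg at hgt
        exact hmem (hF.2 _ hgt)
      have hkhB : (k:ℤ) + (h:ℤ) ≤ F - x := by linarith
      have hkh : k + h ≤ B := by omega
      have hgr : ¬ P (k + h) := Nat.findGreatest_is_greatest (by omega) hkh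
      apply hgr
      refine ⟨hadd k hPk.1 h hh, ?_⟩
      intro hm
      apply hmem
      have : x + ((k + h : ℕ) : ℤ) = x + (k:ℤ) + (h:ℤ) := by push_cast; ring
      rwa [this] at hm
    have hzF : x + (k:ℤ) = F := by
      have := hPF ▸ hkPF
      simpa using this
    apply hFx
    have hFxk : F - x = (k:ℤ) := by linarith
    rw [hFxk]
    exact ⟨k, hPk.1, rfl⟩
end

section
/- Let S̄ = K[y,z,t] and, for an integer h ≥ 2, let J = (yz) + (t^h, zt^{h−1}, …, z^h) + (y²t^{h−1}, y³t^{h−2}, …, y^{h+1}). Then the socle of S̄/J, i.e. the annihilator of the maximal ideal (y,z,t) in S̄/J, has K-dimension 2h − 1, with basis given by the classes of the monomials z t^{h−2}, z²t^{h−3}, …, z^{h−1} and y t^{h−1}, y²t^{h−2}, …, y^h. -/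
open MvPolynomial

/-- The ideal J = (yz) + (z^i t^{h-i} : 0 ≤ i ≤ h) + (y^{i+1} t^{h-i} : 1 ≤ i ≤ h),
with y = X 0, z = X 1, t = X 2. -/
noncomputable def J13 (K : Type*) [Field K] (h : ℕ) : Ideal (MvPolynomial (Fin 3) K) :=
  Ideal.span ({X 0 * X 1} ∪
    {p | ∃ i ≤ h, p = X 1 ^ i * X 2 ^ (h - i)} ∪
    {p | ∃ i, 1 ≤ i ∧ i ≤ h ∧ p = X 0 ^ (i + 1) * X 2 ^ (h - i)})

/-- The socle of `S̄/J`: elements killed by y, z and t. -/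
noncomputable def Soc13 (K : Type*) [Field K] (h : ℕ) :
    Submodule K (MvPolynomial (Fin 3) K ⧸ J13 K h) :=
  LinearMap.ker (LinearMap.mulLeft K (Ideal.Quotient.mk (J13 K h) (X 0))) ⊓
  LinearMap.ker (LinearMap.mulLeft K (Ideal.Quotient.mk (J13 K h) (X 1))) ⊓
  LinearMap.ker (LinearMap.mulLeft K (Ideal.Quotient.mk (J13 K h) (X 2)))

namespace Aux13

/-- "Divisibility by a generator" predicate on exponent vectors. -/
def P (h : ℕ) (d : Fin 3 →₀ ℕ) : Prop :=
  (1 ≤ d 0 ∧ 1 ≤ d 1) ∨ h ≤ d 1 + d 2 ∨ (2 ≤ d 0 ∧ h + 1 ≤ d 0 + d 2)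

instance (h : ℕ) : DecidablePred (P h) := fun _ => by unfold P; infer_instance

/-- Exponent vectors of the generators of J13. -/
def E (h : ℕ) : Set (Fin 3 →₀ ℕ) :=
  {Finsupp.single 0 1 + Finsupp.single 1 1} ∪
  {e | ∃ i ≤ h, e = Finsupp.single 1 i + Finsupp.single 2 (h - i)} ∪
  {e | ∃ i, 1 ≤ i ∧ i ≤ h ∧ e = Finsupp.single 0 (i + 1) + Finsupp.single 2 (h - i)}

lemma exE_iff (h : ℕ) (d : Fin 3 →₀ ℕ) : (∃ e ∈ E h, e ≤ d) ↔ P h d := by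
  constructor
  · rintro ⟨e, ((rfl | ⟨i, hi, rfl⟩) | ⟨i, h1, h2, rfl⟩), hle⟩
    · have h0 := Finsupp.le_def.1 hle 0
      have h1 := Finsupp.le_def.1 hle 1
      simp [Finsupp.single_apply] at h0 h1
      exact Or.inl ⟨h0, h1⟩
    · have h1 := Finsupp.le_def.1 hle 1
      have h2 := Finsupp.le_def.1 hle 2
      simp [Finsupp.single_apply] at h1 h2
      refine Or.inr (Or.inl ?_)
      omega
    · have h0 := Finsupp.le_def.1 hle 0
      have h2' := Finsupp.le_def.1 hle 2
      simp [Finsupp.single_apply] at h0 h2'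
      refine Or.inr (Or.inr ?_)
      omega
  · rintro (⟨h0, h1⟩ | hz | ⟨h0, hy⟩)
    · refine ⟨_, Or.inl (Or.inl rfl), ?_⟩
      rw [Finsupp.le_def]
      intro i; fin_cases i <;> simp [Finsupp.single_apply] <;> omega
    · refine ⟨_, Or.inl (Or.inr ⟨min (d 1) h, min_le_right _ _, rfl⟩), ?_⟩
      rw [Finsupp.le_def]
      intro i; fin_cases i <;> simp [Finsupp.single_apply] <;> omega
    · rcases Nat.eq_zero_or_pos h with rfl | hpos
      · exact ⟨0, Or.inl (Or.inr ⟨0, le_refl 0, by simp⟩),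
          by rw [Finsupp.le_def]; intro i; simp⟩
      refine ⟨_, Or.inr ⟨min (d 0 - 1) h, ?_, min_le_right _ _, rfl⟩, ?_⟩
      · omega
      rw [Finsupp.le_def]
      intro i; fin_cases i <;> simp [Finsupp.single_apply] <;> omega

variable {K : Type*} [Field K]

lemma pow_mul_pow (n m : Fin 3) (i j : ℕ) :
    (X n ^ i * X m ^ j : MvPolynomial (Fin 3) K) =
      monomial (Finsupp.single n i + Finsupp.single m j) 1 := by
  rw [X_pow_eq_monomial, X_pow_eq_monomial, monomial_mul, one_mul]

lemma X_mul_monomial (n : Fin 3) (d : Fin 3 →₀ ℕ) :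
    (X n * monomial d 1 : MvPolynomial (Fin 3) K) =
      monomial (Finsupp.single n 1 + d) 1 := by
  rw [← pow_one (X n), X_pow_eq_monomial, monomial_mul, one_mul]

lemma J13_eq (h : ℕ) :
    J13 K h = Ideal.span ((fun e => monomial e (1 : K)) '' E h) := by
  unfold J13 E
  congr 1
  rw [Set.image_union, Set.image_union, Set.image_singleton]
  congr 1
  · congr 1
    · rw [show (X 0 * X 1 : MvPolynomial (Fin 3) K) = X 0 ^ 1 * X 1 ^ 1 by ring,
        pow_mul_pow]
    · ext p
      simp only [Set.mem_setOf_eq, Set.mem_image]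
      constructor
      · rintro ⟨i, hi, rfl⟩
        exact ⟨_, ⟨i, hi, rfl⟩, (pow_mul_pow 1 2 i (h - i)).symm⟩
      · rintro ⟨e, ⟨i, hi, rfl⟩, rfl⟩
        exact ⟨i, hi, (pow_mul_pow 1 2 i (h - i)).symm⟩
  · ext p
    simp only [Set.mem_setOf_eq, Set.mem_image]
    constructor
    · rintro ⟨i, h1, h2, rfl⟩
      exact ⟨_, ⟨i, h1, h2, rfl⟩, (pow_mul_pow 0 2 (i + 1) (h - i)).symm⟩
    · rintro ⟨e, ⟨i, h1, h2, rfl⟩, rfl⟩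
      exact ⟨i, h1, h2, (pow_mul_pow 0 2 (i + 1) (h - i)).symm⟩

lemma memJ (h : ℕ) (f : MvPolynomial (Fin 3) K) :
    f ∈ J13 K h ↔ ∀ d ∈ f.support, P h d := by
  rw [J13_eq, mem_ideal_span_monomial_image]
  exact forall₂_congr fun d _ => exE_iff h d

lemma mono_memJ {h : ℕ} {e : Fin 3 →₀ ℕ} (he : P h e) :
    (monomial e (1 : K)) ∈ J13 K h := by
  classical
  rw [memJ]
  intro d hd
  rw [support_monomial, if_neg (one_ne_zero : (1 : K) ≠ 0), Finset.mem_singleton] at hd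
  subst hd; exact he

noncomputable def std (h : ℕ) (f : MvPolynomial (Fin 3) K) : MvPolynomial (Fin 3) K :=
  ∑ d ∈ f.support.filter (fun d => ¬ P h d), monomial d (coeff d f)

lemma coeff_std (h : ℕ) (f : MvPolynomial (Fin 3) K) (d : Fin 3 →₀ ℕ) :
    coeff d (std h f) = if P h d then 0 else coeff d f := by
  unfold std
  rw [coeff_sum]
  by_cases hp : P h d
  · rw [if_pos hp]
    apply Finset.sum_eq_zero
    intro d' hd'
    rw [Finset.mem_filter] at hd'
    rw [coeff_monomial, if_neg]
    rintro rfl; exact hd'.2 hp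
  · rw [if_neg hp]
    by_cases hs : d ∈ f.support
    · rw [Finset.sum_eq_single_of_mem d (Finset.mem_filter.2 ⟨hs, hp⟩)]
      · rw [coeff_monomial, if_pos rfl]
      · intro b _ hb; rw [coeff_monomial, if_neg hb]
    · rw [MvPolynomial.notMem_support_iff.1 hs]
      apply Finset.sum_eq_zero
      intro d' hd'
      rw [coeff_monomial, if_neg]
      rintro rfl
      exact hs (Finset.mem_filter.1 hd').1

lemma sub_std_mem (h : ℕ) (f : MvPolynomial (Fin 3) K) : f - std h f ∈ J13 K h := by
  rw [memJ]
  intro d hd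
  rw [mem_support_iff, coeff_sub, coeff_std] at hd
  by_contra hp
  rw [if_neg hp, sub_self] at hd
  exact hd rfl

lemma mk_std (h : ℕ) (f : MvPolynomial (Fin 3) K) :
    Ideal.Quotient.mk (J13 K h) (std h f) = Ideal.Quotient.mk (J13 K h) f := by
  rw [Ideal.Quotient.eq]
  have := (J13 K h).neg_mem (sub_std_mem h f)
  rwa [neg_sub] at this

lemma P_shift {h : ℕ} {n : Fin 3} {g : MvPolynomial (Fin 3) K}
    (hg : X n * g ∈ J13 K h) {d : Fin 3 →₀ ℕ} (hd : d ∈ g.support) :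
    P h (d + Finsupp.single n 1) := by
  have hmem : Finsupp.single n 1 + d ∈ (X n * g).support := by
    rw [mem_support_iff, coeff_X_mul]
    exact mem_support_iff.1 hd
  have := (memJ h _).1 hg _ hmem
  rwa [add_comm] at this

lemma fin3_decomp (d : Fin 3 →₀ ℕ) :
    d = Finsupp.single 0 (d 0) + Finsupp.single 1 (d 1) + Finsupp.single 2 (d 2) := by
  ext i; fin_cases i <;> simp [Finsupp.single_apply]

noncomputable def Tset (h : ℕ) : Finset (Fin 3 →₀ ℕ) :=
  ((Finset.Icc 1 (h - 1)).image fun b => Finsupp.single 1 b + Finsupp.single 2 (h - 1 - b)) ∪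
  ((Finset.Icc 1 h).image fun a => Finsupp.single 0 a + Finsupp.single 2 (h - a))

lemma mem_Tset {h : ℕ} {d : Fin 3 →₀ ℕ} : d ∈ Tset h ↔
    ((∃ b, 1 ≤ b ∧ b ≤ h - 1 ∧ d = Finsupp.single 1 b + Finsupp.single 2 (h - 1 - b)) ∨
     (∃ a, 1 ≤ a ∧ a ≤ h ∧ d = Finsupp.single 0 a + Finsupp.single 2 (h - a))) := by
  simp [Tset, Finset.mem_Icc, eq_comm, and_assoc]

lemma mem_T {h : ℕ} (hh : 2 ≤ h) {d : Fin 3 →₀ ℕ} (hstd : ¬ P h d)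
    (h0 : P h (d + Finsupp.single 0 1)) (h1 : P h (d + Finsupp.single 1 1))
    (h2 : P h (d + Finsupp.single 2 1)) : d ∈ Tset h := by
  rw [mem_Tset]
  unfold P at hstd h0 h1 h2
  simp only [Finsupp.add_apply, Finsupp.single_apply, Fin.ext_iff] at h0 h1 h2
  norm_num at h0 h1 h2
  rcases (by omega : (d 0 = 0 ∧ 1 ≤ d 1 ∧ d 1 ≤ h - 1 ∧ d 2 = h - 1 - d 1) ∨
      (d 1 = 0 ∧ 1 ≤ d 0 ∧ d 0 ≤ h ∧ d 2 = h - d 0)) with hc | hc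
  · refine Or.inl ⟨d 1, hc.2.1, hc.2.2.1, ?_⟩
    conv_lhs => rw [fin3_decomp d]
    rw [hc.1, hc.2.2.2, Finsupp.single_zero, zero_add]
  · refine Or.inr ⟨d 0, hc.2.1, hc.2.2.1, ?_⟩
    conv_lhs => rw [fin3_decomp d]
    rw [hc.1, hc.2.2.2, Finsupp.single_zero, add_zero]

lemma not_P_of_T {h : ℕ} {d : Fin 3 →₀ ℕ} (hd : d ∈ Tset h) : ¬ P h d := by
  rcases mem_Tset.1 hd with ⟨b, h1, h2, rfl⟩ | ⟨a, h1, h2, rfl⟩ <;>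
    unfold P <;>
    simp only [Finsupp.add_apply, Finsupp.single_apply, Fin.ext_iff] <;>
    norm_num <;> omega

lemma P_shift_T {h : ℕ} {d : Fin 3 →₀ ℕ} (hd : d ∈ Tset h) (n : Fin 3) :
    P h (Finsupp.single n 1 + d) := by
  rcases mem_Tset.1 hd with ⟨b, h1, h2, rfl⟩ | ⟨a, h1, h2, rfl⟩ <;>
    fin_cases n <;>
    unfold P <;>
    simp only [Finsupp.add_apply, Finsupp.single_apply, Fin.ext_iff] <;>
    norm_num <;> omega

lemma card_Tset {h : ℕ} (hh : 2 ≤ h) : (Tset h).card = 2 * h - 1 := by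
  rw [Tset, Finset.card_union_of_disjoint, Finset.card_image_of_injOn,
    Finset.card_image_of_injOn, Nat.card_Icc, Nat.card_Icc]
  · omega
  · intro a _ b _ hE
    have := congrArg (fun f : Fin 3 →₀ ℕ => f 0) hE
    simpa [Finsupp.single_apply] using this
  · intro a _ b _ hE
    have := congrArg (fun f : Fin 3 →₀ ℕ => f 1) hE
    simpa [Finsupp.single_apply] using this
  · rw [Finset.disjoint_left]
    rintro d hd1 hd2
    simp only [Finset.mem_image, Finset.mem_Icc] at hd1 hd2
    obtain ⟨b, hb, rfl⟩ := hd1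
    obtain ⟨a, ha, hE⟩ := hd2
    have := congrArg (fun f : Fin 3 →₀ ℕ => f 0) hE
    simp [Finsupp.single_apply] at this
    omega

lemma setEq (h : ℕ) :
    ({p | ∃ i, 1 ≤ i ∧ i ≤ h - 1 ∧ p = X 1 ^ i * X 2 ^ (h - 1 - i)} ∪
     {p | ∃ i, 1 ≤ i ∧ i ≤ h ∧ p = X 0 ^ i * X 2 ^ (h - i)} :
       Set (MvPolynomial (Fin 3) K)) =
    (fun d => monomial d (1 : K)) '' ↑(Tset h) := by
  ext p
  simp only [Set.mem_union, Set.mem_setOf_eq, Set.mem_image, Finset.mem_coe, mem_Tset]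
  constructor
  · rintro (⟨i, h1, h2, rfl⟩ | ⟨i, h1, h2, rfl⟩)
    · exact ⟨_, Or.inl ⟨i, h1, h2, rfl⟩, (pow_mul_pow 1 2 i (h - 1 - i)).symm⟩
    · exact ⟨_, Or.inr ⟨i, h1, h2, rfl⟩, (pow_mul_pow 0 2 i (h - i)).symm⟩
  · rintro ⟨d, (⟨b, h1, h2, rfl⟩ | ⟨a, h1, h2, rfl⟩), rfl⟩
    · exact Or.inl ⟨b, h1, h2, (pow_mul_pow 1 2 b (h - 1 - b)).symm⟩
    · exact Or.inr ⟨a, h1, h2, (pow_mul_pow 0 2 a (h - a)).symm⟩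

lemma linIndep (h : ℕ) (hh : 2 ≤ h) :
    LinearIndependent K
      (fun d : ↑(Tset h) =>
        Ideal.Quotient.mk (J13 K h) (monomial (d : Fin 3 →₀ ℕ) (1 : K))) := by
  rw [Fintype.linearIndependent_iff]
  intro g hg i
  by_contra hgi
  set q : MvPolynomial (Fin 3) K :=
    ∑ j : ↑(Tset h), g j • monomial (j : Fin 3 →₀ ℕ) (1 : K) with hq_def
  have hmkq : Ideal.Quotient.mk (J13 K h) q = 0 := by
    have : Ideal.Quotient.mkₐ K (J13 K h) q =
        ∑ j : ↑(Tset h), g j • Ideal.Quotient.mkₐ K (J13 K h)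
          (monomial (j : Fin 3 →₀ ℕ) (1 : K)) := by
      rw [hq_def, map_sum]
      exact Finset.sum_congr rfl fun j _ => map_smul _ _ _
    simp only [Ideal.Quotient.mkₐ_eq_mk] at this
    rw [this, hg]
  have hqJ : q ∈ J13 K h := Ideal.Quotient.eq_zero_iff_mem.1 hmkq
  have hsup : (i : Fin 3 →₀ ℕ) ∈ q.support := by
    rw [mem_support_iff, hq_def, coeff_sum, Finset.sum_eq_single i]
    · rw [MvPolynomial.coeff_smul, coeff_monomial, if_pos rfl, smul_eq_mul, mul_one]
      exact hgi
    · intro b _ hb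
      rw [MvPolynomial.coeff_smul, coeff_monomial, if_neg, smul_zero]
      exact fun hE => hb (Subtype.ext hE)
    · intro hi; exact absurd (Finset.mem_univ i) hi
  exact not_P_of_T i.2 ((memJ h q).1 hqJ _ hsup)

end Aux13

open Aux13 in
set_option maxHeartbeats 1000000 in
theorem stmt_13 (K : Type*) [Field K] (h : ℕ) (hh : 2 ≤ h) :
    Submodule.span K
        (Ideal.Quotient.mk (J13 K h) ''
          ({p | ∃ i, 1 ≤ i ∧ i ≤ h - 1 ∧ p = X 1 ^ i * X 2 ^ (h - 1 - i)} ∪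
           {p | ∃ i, 1 ≤ i ∧ i ≤ h ∧ p = X 0 ^ i * X 2 ^ (h - i)})) = Soc13 K h ∧
      Module.finrank K (Soc13 K h) = 2 * h - 1 := by
  have hset := setEq (K := K) h
  have hspan : Submodule.span K
      (Ideal.Quotient.mk (J13 K h) ''
        ({p | ∃ i, 1 ≤ i ∧ i ≤ h - 1 ∧ p = X 1 ^ i * X 2 ^ (h - 1 - i)} ∪
         {p | ∃ i, 1 ≤ i ∧ i ≤ h ∧ p = X 0 ^ i * X 2 ^ (h - i)})) = Soc13 K h := by
    apply le_antisymm
    · rw [Submodule.span_le]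
      rintro x ⟨p, hp, rfl⟩
      rw [hset] at hp
      obtain ⟨d, hd, rfl⟩ := hp
      rw [Finset.mem_coe] at hd
      have hker : ∀ n : Fin 3,
          Ideal.Quotient.mk (J13 K h) (X n) * Ideal.Quotient.mk (J13 K h) (monomial d 1) = 0 := by
        intro n
        rw [← map_mul, X_mul_monomial, Ideal.Quotient.eq_zero_iff_mem]
        exact mono_memJ (P_shift_T hd n)
      rw [SetLike.mem_coe, Soc13, Submodule.mem_inf, Submodule.mem_inf]
      refine ⟨⟨?_, ?_⟩, ?_⟩ <;>
        · rw [LinearMap.mem_ker, LinearMap.mulLeft_apply]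
          exact hker _
    · intro x hx
      rw [Soc13, Submodule.mem_inf, Submodule.mem_inf] at hx
      obtain ⟨⟨hx0, hx1⟩, hx2⟩ := hx
      rw [LinearMap.mem_ker, LinearMap.mulLeft_apply] at hx0 hx1 hx2
      obtain ⟨f, rfl⟩ := Ideal.Quotient.mk_surjective x
      have hXf : ∀ n : Fin 3, X n * f ∈ J13 K h := by
        intro n
        rw [← Ideal.Quotient.eq_zero_iff_mem, map_mul]
        fin_cases n
        · exact hx0
        · exact hx1
        · exact hx2
      have hXstd : ∀ n : Fin 3, X n * std h f ∈ J13 K h := by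
        intro n
        have h2 : X n * (f - std h f) ∈ J13 K h :=
          Ideal.mul_mem_left _ _ (sub_std_mem h f)
        have := (J13 K h).sub_mem (hXf n) h2
        rwa [mul_sub, sub_sub_cancel] at this
      rw [← mk_std h f]
      unfold std
      rw [map_sum]
      apply Submodule.sum_mem
      intro d hd
      rw [Finset.mem_filter] at hd
      have hd_std : d ∈ (std h f).support := by
        rw [mem_support_iff, coeff_std, if_neg hd.2]
        exact mem_support_iff.1 hd.1
      have hdT : d ∈ Tset h :=
        mem_T hh hd.2 (P_shift (hXstd 0) hd_std) (P_shift (hXstd 1) hd_std)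
          (P_shift (hXstd 2) hd_std)
      have : (monomial d (coeff d f) : MvPolynomial (Fin 3) K) =
          coeff d f • monomial d 1 := by
        rw [MvPolynomial.smul_monomial, smul_eq_mul, mul_one]
      rw [this, ← Ideal.Quotient.mkₐ_eq_mk K (J13 K h), map_smul,
        Ideal.Quotient.mkₐ_eq_mk]
      apply Submodule.smul_mem
      apply Submodule.subset_span
      refine ⟨monomial d 1, ?_, rfl⟩
      rw [hset]
      exact ⟨d, hdT, rfl⟩
  refine ⟨hspan, ?_⟩
  rw [← hspan, hset, ← Set.image_comp]
  have : (Ideal.Quotient.mk (J13 K h) ∘ fun d => monomial d (1 : K)) '' ↑(Tset h) =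
      Set.range (fun d : ↑(Tset h) =>
        Ideal.Quotient.mk (J13 K h) (monomial (d : Fin 3 →₀ ℕ) (1 : K))) := by
    rw [Set.image_eq_range]
    rfl
  rw [this, finrank_span_eq_card (linIndep h hh), Fintype.card_coe, card_Tset hh]
end

section
/- Let S̄ = K[y,z,t] and, for h ≥ 2, let J = (yz) + (z^i t^{h−i} : 0 ≤ i ≤ h) + (y^{i+1} t^{h−i} : 1 ≤ i ≤ h). Then J requires exactly 2h + 2 minimal generators, i.e. the listed 2h + 2 generators form a minimal generating set of J. -/
open MvPolynomial

def divIdeal (K : Type*) [Field K] (D : Set (Fin 3 →₀ ℕ)) : Ideal (MvPolynomial (Fin 3) K) where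
  carrier := {p | ∀ m ∈ p.support, ∃ d ∈ D, d ≤ m}
  zero_mem' := by simp
  add_mem' := by
    intro p q hp hq m hm
    rcases Finset.mem_union.1 (Finsupp.support_add hm) with h | h
    exacts [hp m h, hq m h]
  smul_mem' := by
    intro c p hp m hm
    rw [smul_eq_mul] at hm
    obtain ⟨a, ha, b, hb, rfl⟩ := Finset.mem_add.1 (support_mul c p hm)
    obtain ⟨d, hd, hdb⟩ := hp b hb
    exact ⟨d, hd, hdb.trans le_add_self⟩

theorem mem_support_monomial_one (K : Type*) [Field K] (d : Fin 3 →₀ ℕ) {m : Fin 3 →₀ ℕ}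
    (hm : m ∈ (monomial d (1:K)).support) : m = d := by
  classical
  rw [support_monomial, if_neg (one_ne_zero)] at hm
  exact Finset.mem_singleton.1 hm

theorem notMem_span_aux (K : Type*) [Field K] (S : Set (MvPolynomial (Fin 3) K)) (d : Fin 3 →₀ ℕ)
    (hS : ∀ p ∈ S, ∃ e, ¬ e ≤ d ∧ p = monomial e 1) :
    (monomial d 1 : MvPolynomial (Fin 3) K) ∉ Ideal.span S := by
  classical
  intro hmem
  have hle : Ideal.span S ≤ divIdeal K {e | ¬ e ≤ d} := by
    rw [Ideal.span_le]
    intro p hp m hm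
    obtain ⟨e, he, rfl⟩ := hS p hp
    rw [mem_support_monomial_one K e hm]
    exact ⟨e, he, le_refl _⟩
  obtain ⟨e, he, hle'⟩ := hle hmem d (by
    rw [support_monomial, if_neg (one_ne_zero)]; exact Finset.mem_singleton_self d)
  exact he hle'

theorem monopow (K : Type*) [Field K] (a b : Fin 3) (i j : ℕ) :
    (X a ^ i * X b ^ j : MvPolynomial (Fin 3) K) =
      monomial (Finsupp.single a i + Finsupp.single b j) 1 := by
  rw [X_pow_eq_monomial, X_pow_eq_monomial, monomial_mul, one_mul]

noncomputable def eA : Fin 3 →₀ ℕ := Finsupp.single 0 1 + Finsupp.single 1 1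
noncomputable def eB (h i : ℕ) : Fin 3 →₀ ℕ := Finsupp.single 1 i + Finsupp.single 2 (h - i)
noncomputable def eC (h i : ℕ) : Fin 3 →₀ ℕ := Finsupp.single 0 (i+1) + Finsupp.single 2 (h - i)

theorem eA_apply : eA 0 = 1 ∧ eA 1 = 1 ∧ eA 2 = 0 := by
  simp [eA, Finsupp.add_apply, Finsupp.single_apply]
theorem eB_apply (h i : ℕ) : eB h i 0 = 0 ∧ eB h i 1 = i ∧ eB h i 2 = h - i := by
  simp [eB, Finsupp.add_apply, Finsupp.single_apply]
theorem eC_apply (h i : ℕ) : eC h i 0 = i + 1 ∧ eC h i 1 = 0 ∧ eC h i 2 = h - i := by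
  simp [eC, Finsupp.add_apply, Finsupp.single_apply]

theorem hA_eq (K : Type*) [Field K] : (X 0 * X 1 : MvPolynomial (Fin 3) K) = monomial eA 1 := by
  rw [show (X 0 : MvPolynomial (Fin 3) K) * X 1 = X 0 ^ 1 * X 1 ^ 1 by ring, monopow]; rfl
theorem hB_eq (K : Type*) [Field K] (h i : ℕ) :
    (X 1 ^ i * X 2 ^ (h - i) : MvPolynomial (Fin 3) K) = monomial (eB h i) 1 := monopow K 1 2 i (h-i)
theorem hC_eq (K : Type*) [Field K] (h i : ℕ) :
    (X 0 ^ (i+1) * X 2 ^ (h - i) : MvPolynomial (Fin 3) K) = monomial (eC h i) 1 := monopow K 0 2 (i+1) (h-i)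

theorem stmt_14 (K : Type*) [Field K] (h : ℕ) (hh : 2 ≤ h)
    (G : Set (MvPolynomial (Fin 3) K))
    (hG : G = {X 0 * X 1} ∪
      {p | ∃ i ≤ h, p = X 1 ^ i * X 2 ^ (h - i)} ∪
      {p | ∃ i, 1 ≤ i ∧ i ≤ h ∧ p = X 0 ^ (i + 1) * X 2 ^ (h - i)}) :
    G.ncard = 2 * h + 2 ∧ ∀ g ∈ G, g ∉ Ideal.span (G \ {g}) := by
  subst hG
  obtain ⟨hA0, hA1, hA2⟩ := eA_apply
  -- image forms of the three pieces
  have hBset : {p : MvPolynomial (Fin 3) K | ∃ i ≤ h, p = X 1 ^ i * X 2 ^ (h - i)} =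
      (fun i => (monomial (eB h i) 1 : MvPolynomial (Fin 3) K)) '' Set.Iic h := by
    ext p
    simp only [Set.mem_setOf_eq, Set.mem_image, Set.mem_Iic]
    constructor
    · rintro ⟨i, hi, rfl⟩; exact ⟨i, hi, (hB_eq K h i).symm⟩
    · rintro ⟨i, hi, rfl⟩; exact ⟨i, hi, (hB_eq K h i).symm⟩
  have hCset : {p : MvPolynomial (Fin 3) K | ∃ i, 1 ≤ i ∧ i ≤ h ∧ p = X 0 ^ (i+1) * X 2 ^ (h - i)} =
      (fun i => (monomial (eC h i) 1 : MvPolynomial (Fin 3) K)) '' Set.Icc 1 h := by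
    ext p
    simp only [Set.mem_setOf_eq, Set.mem_image, Set.mem_Icc]
    constructor
    · rintro ⟨i, hi1, hi2, rfl⟩; exact ⟨i, ⟨hi1, hi2⟩, (hC_eq K h i).symm⟩
    · rintro ⟨i, ⟨hi1, hi2⟩, rfl⟩; exact ⟨i, hi1, hi2, (hC_eq K h i).symm⟩
  have minj : Function.Injective (fun s : Fin 3 →₀ ℕ => (monomial s (1:K) : MvPolynomial (Fin 3) K)) :=
    monomial_left_injective one_ne_zero
  have hBinj : Function.Injective (fun i => (monomial (eB h i) 1 : MvPolynomial (Fin 3) K)) := by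
    intro i j hij
    have := DFunLike.congr_fun (minj hij) 1
    rwa [(eB_apply h i).2.1, (eB_apply h j).2.1] at this
  have hCinj : Function.Injective (fun i => (monomial (eC h i) 1 : MvPolynomial (Fin 3) K)) := by
    intro i j hij
    have := DFunLike.congr_fun (minj hij) 0
    rw [(eC_apply h i).1, (eC_apply h j).1] at this
    omega
  constructor
  · -- cardinality
    rw [hA_eq K, hBset, hCset]
    have d1 : Disjoint ({(monomial eA 1 : MvPolynomial (Fin 3) K)})
        ((fun i => (monomial (eB h i) 1 : MvPolynomial (Fin 3) K)) '' Set.Iic h) := by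
      rw [Set.disjoint_singleton_left]
      rintro ⟨i, hi, heq⟩
      have := DFunLike.congr_fun (minj heq) 0
      rw [(eB_apply h i).1, hA0] at this; omega
    have d2 : Disjoint ({(monomial eA 1 : MvPolynomial (Fin 3) K)} ∪
        (fun i => (monomial (eB h i) 1 : MvPolynomial (Fin 3) K)) '' Set.Iic h)
        ((fun i => (monomial (eC h i) 1 : MvPolynomial (Fin 3) K)) '' Set.Icc 1 h) := by
      rw [Set.disjoint_union_left]
      constructor
      · rw [Set.disjoint_singleton_left]
        rintro ⟨i, hi, heq⟩
        have := DFunLike.congr_fun (minj heq) 1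
        rw [(eC_apply h i).2.1, hA1] at this; omega
      · rw [Set.disjoint_left]
        rintro p ⟨i, hi, rfl⟩ ⟨j, hj, heq⟩
        have := DFunLike.congr_fun (minj heq) 0
        rw [(eC_apply h j).1, (eB_apply h i).1] at this; omega
    rw [Set.ncard_union_eq d2 (Set.Finite.union (Set.finite_singleton _)
        ((Set.finite_Iic h).image _)) ((Set.finite_Icc 1 h).image _),
      Set.ncard_union_eq d1 (Set.finite_singleton _) ((Set.finite_Iic h).image _),
      Set.ncard_singleton, Set.ncard_image_of_injective _ hBinj,
      Set.ncard_image_of_injective _ hCinj,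
      ← Finset.coe_Iic, ← Finset.coe_Icc, Set.ncard_coe_finset, Set.ncard_coe_finset,
      Nat.card_Iic, Nat.card_Icc]
    omega
  · -- minimality
    intro g hg
    simp only [Set.mem_union, Set.mem_singleton_iff, Set.mem_setOf_eq] at hg
    have key : ∀ (d : Fin 3 →₀ ℕ), g = monomial d 1 →
        (∀ p ∈ ({X 0 * X 1} ∪ {p | ∃ i ≤ h, p = X 1 ^ i * X 2 ^ (h - i)} ∪
          {p | ∃ i, 1 ≤ i ∧ i ≤ h ∧ p = X 0 ^ (i + 1) * X 2 ^ (h - i)} :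
            Set (MvPolynomial (Fin 3) K)) \ {g}, ∃ e, ¬ e ≤ d ∧ p = monomial e 1) →
        g ∉ Ideal.span (({X 0 * X 1} ∪ {p | ∃ i ≤ h, p = X 1 ^ i * X 2 ^ (h - i)} ∪
          {p | ∃ i, 1 ≤ i ∧ i ≤ h ∧ p = X 0 ^ (i + 1) * X 2 ^ (h - i)} :
            Set (MvPolynomial (Fin 3) K)) \ {g}) := by
      rintro d rfl hS
      exact notMem_span_aux K _ d hS
    rcases hg with (rfl | ⟨i, hi, rfl⟩) | ⟨i, hi1, hi2, rfl⟩
    · refine key eA (hA_eq K) ?_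
      rintro p ⟨hpG, hpne⟩
      rw [Set.mem_singleton_iff] at hpne
      simp only [Set.mem_union, Set.mem_singleton_iff, Set.mem_setOf_eq] at hpG
      rcases hpG with (rfl | ⟨j, hj, rfl⟩) | ⟨j, hj1, hj2, rfl⟩
      · exact absurd rfl hpne
      · refine ⟨eB h j, ?_, hB_eq K h j⟩
        intro hle
        have h1 := Finsupp.le_def.1 hle 1
        have h2 := Finsupp.le_def.1 hle 2
        rw [(eB_apply h j).2.1, hA1] at h1
        rw [(eB_apply h j).2.2, hA2] at h2
        omega
      · refine ⟨eC h j, ?_, hC_eq K h j⟩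
        intro hle
        have h0 := Finsupp.le_def.1 hle 0
        rw [(eC_apply h j).1, hA0] at h0
        omega
    · refine key (eB h i) (hB_eq K h i) ?_
      rintro p ⟨hpG, hpne⟩
      rw [Set.mem_singleton_iff] at hpne
      simp only [Set.mem_union, Set.mem_singleton_iff, Set.mem_setOf_eq] at hpG
      rcases hpG with (rfl | ⟨j, hj, rfl⟩) | ⟨j, hj1, hj2, rfl⟩
      · refine ⟨eA, ?_, hA_eq K⟩
        intro hle
        have h0 := Finsupp.le_def.1 hle 0
        rw [hA0, (eB_apply h i).1] at h0
        omega
      · refine ⟨eB h j, ?_, hB_eq K h j⟩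
        intro hle
        have h1 := Finsupp.le_def.1 hle 1
        have h2 := Finsupp.le_def.1 hle 2
        rw [(eB_apply h j).2.1, (eB_apply h i).2.1] at h1
        rw [(eB_apply h j).2.2, (eB_apply h i).2.2] at h2
        have : j = i := by omega
        subst this
        exact hpne rfl
      · refine ⟨eC h j, ?_, hC_eq K h j⟩
        intro hle
        have h0 := Finsupp.le_def.1 hle 0
        rw [(eC_apply h j).1, (eB_apply h i).1] at h0
        omega
    · refine key (eC h i) (hC_eq K h i) ?_
      rintro p ⟨hpG, hpne⟩
      rw [Set.mem_singleton_iff] at hpne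
      simp only [Set.mem_union, Set.mem_singleton_iff, Set.mem_setOf_eq] at hpG
      rcases hpG with (rfl | ⟨j, hj, rfl⟩) | ⟨j, hj1, hj2, rfl⟩
      · refine ⟨eA, ?_, hA_eq K⟩
        intro hle
        have h1 := Finsupp.le_def.1 hle 1
        rw [hA1, (eC_apply h i).2.1] at h1
        omega
      · refine ⟨eB h j, ?_, hB_eq K h j⟩
        intro hle
        have h1 := Finsupp.le_def.1 hle 1
        have h2 := Finsupp.le_def.1 hle 2
        rw [(eB_apply h j).2.1, (eC_apply h i).2.1] at h1
        rw [(eB_apply h j).2.2, (eC_apply h i).2.2] at h2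
        omega
      · refine ⟨eC h j, ?_, hC_eq K h j⟩
        intro hle
        have h0 := Finsupp.le_def.1 hle 0
        have h2 := Finsupp.le_def.1 hle 2
        rw [(eC_apply h j).1, (eC_apply h i).1] at h0
        rw [(eC_apply h j).2.2, (eC_apply h i).2.2] at h2
        have : j = i := by omega
        subst this
        exact hpne rfl
end

section
/- Let L be a numerical semigroup, H = ⟨cL, d⟩ a simple gluing with c > 1, gcd(c,d) = 1, d ∈ L not a minimal generator, and write d = Σ λᵢaᵢ in the generators a₁,…,aₙ of L. Then the gluing binomial f = x_{n+1}^c − Π xᵢ^{λᵢ} is a nonzerodivisor on K[x₁,…,x_{n+1}]/I_L·K[x₁,…,x_{n+1}], where I_L ⊆ K[x₁,…,xₙ] is the toric ideal of L. -/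
open MvPolynomial

set_option synthInstance.maxHeartbeats 1000000 in
set_option maxHeartbeats 1000000 in
theorem stmt_15 (K : Type*) [Field K] (n : ℕ) (a : Fin n → ℕ)
    (hmono : StrictMono a) (hpos : ∀ i, 0 < a i)
    (c d : ℕ) (hc : 1 < c) (hcd : Nat.gcd c d = 1)
    (lam : Fin n → ℕ) (hd : d = ∑ i, lam i * a i)
    (hdL : ∀ i, d ≠ a i)
    (IL : Ideal (MvPolynomial (Fin n) K))
    (hIL : IL = RingHom.ker (MvPolynomial.aeval
        (fun i => Polynomial.X ^ a i : Fin n → Polynomial K)))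
    (J : Ideal (MvPolynomial (Fin (n + 1)) K))
    (hJ : J = Ideal.map (MvPolynomial.rename (Fin.castSucc (n := n))).toRingHom IL)
    (f : MvPolynomial (Fin (n + 1)) K)
    (hf : f = X (Fin.last n) ^ c - ∏ i, X (Fin.castSucc i) ^ lam i) :
    ∀ g : MvPolynomial (Fin (n + 1)) K, f * g ∈ J → g ∈ J := by
  intro g hg
  -- IL is prime
  haveI hILprime : IL.IsPrime := by
    rw [hIL]
    exact RingHom.ker_isPrime _
  -- the equivalence separating the last variable
  let E : MvPolynomial (Fin (n + 1)) K ≃ₐ[K] Polynomial (MvPolynomial (Fin n) K) :=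
    (renameEquiv K (finSuccEquiv' (Fin.last n))).trans (optionEquivLeft K (Fin n))
  have hEX : ∀ j : Fin n, E (X (Fin.castSucc j)) = Polynomial.C (X j) := by
    intro j
    simp [E, finSuccEquiv'_last_apply_castSucc, optionEquivLeft_X_some]
  have hElast : E (X (Fin.last n)) = Polynomial.X := by
    simp [E, finSuccEquiv'_at, optionEquivLeft_X_none]
  have hcomp : ∀ p : MvPolynomial (Fin n) K,
      E (rename (Fin.castSucc (n := n)) p) = Polynomial.C p := by
    intro p
    induction p using MvPolynomial.induction_on with
    | C r => simp [E, optionEquivLeft_C]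
    | add p q hp hq => simp [map_add, hp, hq]
    | mul_X p j hp => simp [map_mul, hp, hEX]
  set Q : Ideal (Polynomial (MvPolynomial (Fin n) K)) :=
    Ideal.map (Polynomial.C : MvPolynomial (Fin n) K →+* _) IL with hQdef
  set ER : MvPolynomial (Fin (n + 1)) K →+* Polynomial (MvPolynomial (Fin n) K) :=
    E.toAlgHom.toRingHom with hER
  have hmapJ : Ideal.map ER J = Q := by
    rw [hJ, Ideal.map_map, hQdef]
    congr 1
    exact RingHom.ext hcomp
  have hmem : ∀ h : MvPolynomial (Fin (n + 1)) K, h ∈ J ↔ E h ∈ Q := by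
    intro h
    rw [← hmapJ]
    constructor
    · intro hh; exact Ideal.mem_map_of_mem _ hh
    · intro hh
      have := Ideal.comap_map_of_bijective ER E.bijective (I := J)
      rw [← this]
      exact hh
  -- Q is the kernel of mapping coefficients to the quotient
  have hQker : Q = RingHom.ker (Polynomial.mapRingHom (Ideal.Quotient.mk IL)) := by
    rw [Polynomial.ker_mapRingHom, Ideal.mk_ker, hQdef]
  haveI : IsDomain (MvPolynomial (Fin n) K ⧸ IL) := Ideal.Quotient.isDomain IL
  haveI hQprime : Q.IsPrime := by
    rw [hQker]; exact RingHom.ker_isPrime _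
  -- f is not in J
  have hfQ : E f ∉ Q := by
    rw [hQker, RingHom.mem_ker]
    intro habs
    have hEf : E f = Polynomial.X ^ c - Polynomial.C (∏ i, X i ^ lam i) := by
      simp [hf, map_sub, map_pow, map_prod, hEX, hElast]
    rw [hEf, map_sub, map_pow] at habs
    simp only [Polynomial.coe_mapRingHom, Polynomial.map_X, Polynomial.map_C] at habs
    have h0 := congrArg (fun p => Polynomial.coeff p c) habs
    simp only [Polynomial.coeff_sub, Polynomial.coeff_X_pow, Polynomial.coeff_C,
      if_pos rfl, if_neg (by omega : ¬ c = 0), Polynomial.coeff_zero, sub_zero] at h0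
    exact one_ne_zero h0
  have hfg : E f * E g ∈ Q := by
    rw [← map_mul]
    exact (hmem _).1 hg
  rw [hmem]
  exact (hQprime.mem_or_mem hfg).resolve_left hfQ
end

section
/- Let L be a numerical semigroup with toric ideal I_L ⊆ K[x₁,…,xₙ], and let H = ⟨cL, d⟩ with c > 1, gcd(c,d) = 1, d = Σ λᵢaᵢ ∈ L with Σλᵢ maximal. Then the toric ideal of H in K[x₁,…,x_{n+1}] equals (I_L, f) where f = x_{n+1}^c − Π xᵢ^{λᵢ}. -/
/-!
Splitting off the last variable identifies `K[x₁, …, xₙ₊₁]` with `K[x₁, …, xₙ][y]`, and the map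
defining `I_H` becomes evaluation at `y = t^d` after applying `ψ : xᵢ ↦ t^(c aᵢ)` to the
coefficients. The map `ψ` is the map defining `I_L` followed by the injective substitution
`t ↦ t^c`, so it has kernel `I_L` and lands in `K[t^c]`. Division by the monic polynomial
`f = y^c - x^λ`, which lies in `I_H`, reduces the problem to remainders `∑_{l < c} r_l y^l` killed
by the evaluation. Since `gcd(c, d) = 1`, the shifts `t^(d l)` for `l < c` lie in distinct
residue classes modulo `c`, so the summands `ψ(r_l) t^(d l)` cannot cancel and every `r_l` lies
in `I_L`.
-/

theorem Nat.not_dvd_add_mul_sub_mul {c d N k l : ℕ} (hcd : c.Coprime d) (hN : c ∣ N)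
    (hk : k < c) (hl : l < c) (hlk : l ≠ k) (hle : d * l ≤ N + d * k) :
    ¬ c ∣ N + d * k - d * l := by
  intro hdvd
  refine hlk (Nat.ModEq.eq_of_lt_of_lt ?_ hl hk)
  refine Nat.ModEq.cancel_left_of_coprime hcd ?_
  calc d * l ≡ N + d * k [MOD c] := (Nat.modEq_iff_dvd' hle).mpr hdvd
    _ ≡ 0 + d * k [MOD c] := Nat.ModEq.add_right _ (Nat.modEq_zero_iff_dvd.mpr hN)
    _ = d * k := zero_add _

namespace Polynomial

section Semiring

variable {R : Type*} [Semiring R]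

theorem eq_zero_of_sum_mul_X_pow_eq_zero {c d : ℕ} (hcd : c.Coprime d) {g : ℕ → R[X]}
    (hg : ∀ l N, ¬ c ∣ N → (g l).coeff N = 0)
    (hsum : ∑ l ∈ Finset.range c, g l * X ^ (d * l) = 0) {k : ℕ} (hk : k < c) : g k = 0 := by
  ext N
  rw [coeff_zero]
  by_cases hN : c ∣ N
  swap
  · exact hg k N hN
  -- only `l = k` contributes to the coefficient of `X ^ (N + d * k)`
  have hcoeff := congrArg (coeff · (N + d * k)) hsum
  simp only [finsetSum_coeff, coeff_zero] at hcoeff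
  rwa [Finset.sum_eq_single_of_mem k (Finset.mem_range.2 hk), coeff_mul_X_pow] at hcoeff
  intro l hl hlk
  rw [coeff_mul_X_pow']
  split_ifs with hle
  · exact hg l _ (Nat.not_dvd_add_mul_sub_mul hcd hN hk (Finset.mem_range.1 hl) hlk hle)
  · rfl

end Semiring

variable {R S : Type*} [CommRing R] [CommRing S] (φ : R →+* S[X]) {c d : ℕ}

theorem mem_map_C_ker_of_eval₂_X_pow_eq_zero (hcd : c.Coprime d)
    (hφ : ∀ g N, ¬ c ∣ N → (φ g).coeff N = 0) {r : R[X]} (hr : r.natDegree < c)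
    (h : eval₂ φ (X ^ d) r = 0) : r ∈ Ideal.map C (RingHom.ker φ) := by
  rw [Ideal.mem_map_C_iff]
  intro k
  rw [RingHom.mem_ker]
  rcases lt_or_ge k c with hk | hk
  · refine eq_zero_of_sum_mul_X_pow_eq_zero hcd (g := fun l => φ (r.coeff l))
      (fun l => hφ _) ?_ hk
    simpa only [eval₂_eq_sum_range' φ hr, ← pow_mul] using h
  · rw [coeff_eq_zero_of_natDegree_lt (hr.trans_le hk), map_zero]

theorem ker_eval₂RingHom_X_pow [Nontrivial R] (hc : 0 < c) (hcd : c.Coprime d)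
    (hφ : ∀ g N, ¬ c ∣ N → (φ g).coeff N = 0) {m : R} (hm : φ m = X ^ (d * c)) :
    RingHom.ker (eval₂RingHom φ (X ^ d)) =
      Ideal.map C (RingHom.ker φ) ⊔ Ideal.span {X ^ c - C m} := by
  have hF : (X ^ c - C m).Monic := monic_X_pow_sub_C m hc.ne'
  have hF1 : X ^ c - C m ≠ 1 := fun h => by
    have := congrArg natDegree h
    rw [natDegree_X_pow_sub_C, natDegree_one] at this
    exact hc.ne' this
  have hFker : X ^ c - C m ∈ RingHom.ker (eval₂RingHom φ (X ^ d)) := by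
    simp [hm, ← pow_mul, mul_comm]
  refine le_antisymm (fun p hp => ?_) ?_
  · rw [← modByMonic_add_div p (X ^ c - C m)] at hp ⊢
    have hr : eval₂ φ (X ^ d) (p %ₘ (X ^ c - C m)) = 0 := by
      simpa [hm, ← pow_mul, mul_comm] using hp
    refine Ideal.add_mem _ (Ideal.mem_sup_left ?_)
      (Ideal.mem_sup_right (Ideal.mul_mem_right _ _ (Ideal.mem_span_singleton_self _)))
    refine mem_map_C_ker_of_eval₂_X_pow_eq_zero φ hcd hφ ?_ hr
    simpa using natDegree_modByMonic_lt p hF hF1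
  · refine sup_le ?_ ((Ideal.span_singleton_le_iff_mem _).2 hFker)
    rw [Ideal.map_le_iff_le_comap]
    intro g hg
    simpa using hg

end Polynomial

namespace MvPolynomial

variable (R : Type*) [CommSemiring R] (n : ℕ)

noncomputable def finSuccLastEquiv :
    MvPolynomial (Fin (n + 1)) R ≃ₐ[R] Polynomial (MvPolynomial (Fin n) R) :=
  (renameEquiv R finSuccEquivLast).trans (optionEquivLeft R (Fin n))

variable {R n}

@[simp]
theorem finSuccLastEquiv_X_castSucc (i : Fin n) :
    finSuccLastEquiv R n (X i.castSucc) = Polynomial.C (X i) := by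
  simp [finSuccLastEquiv, optionEquivLeft_X_some]

@[simp]
theorem finSuccLastEquiv_X_last : finSuccLastEquiv R n (X (Fin.last n)) = Polynomial.X := by
  simp [finSuccLastEquiv, optionEquivLeft_X_none]

@[simp]
theorem finSuccLastEquiv_rename_castSucc (p : MvPolynomial (Fin n) R) :
    finSuccLastEquiv R n (rename Fin.castSucc p) = Polynomial.C p := by
  induction p using MvPolynomial.induction_on <;> simp_all [finSuccLastEquiv, optionEquivLeft_C]

theorem finSuccLastEquiv_comp_rename_castSucc :
    (finSuccLastEquiv R n : MvPolynomial (Fin (n + 1)) R →+* _).comp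
      (rename Fin.castSucc).toRingHom = Polynomial.C :=
  RingHom.ext finSuccLastEquiv_rename_castSucc

theorem aeval_eq_eval₂_finSuccLastEquiv {S : Type*} [CommSemiring S] [Algebra R S]
    (v : Fin (n + 1) → S) (p : MvPolynomial (Fin (n + 1)) R) :
    aeval v p = Polynomial.eval₂ (aeval (R := R) (v ∘ Fin.castSucc)).toRingHom
      (v (Fin.last n)) (finSuccLastEquiv R n p) := by
  induction p using MvPolynomial.induction_on with
  | C r => simp [finSuccLastEquiv, optionEquivLeft_C]
  | add p q hp hq => simp [hp, hq]
  | mul_X p j hp => induction j using Fin.lastCases <;> simp [hp]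

theorem ker_aeval_eq_comap_finSuccLastEquiv {S : Type*} [CommSemiring S] [Algebra R S]
    (v : Fin (n + 1) → S) :
    RingHom.ker (aeval v) =
      Ideal.comap (finSuccLastEquiv R n : MvPolynomial (Fin (n + 1)) R →+* _)
        (RingHom.ker (Polynomial.eval₂RingHom (aeval (R := R) (v ∘ Fin.castSucc)).toRingHom
          (v (Fin.last n)))) := by
  ext p
  simp [aeval_eq_eval₂_finSuccLastEquiv]

theorem map_finSuccLastEquiv_sup_span {R : Type*} [CommRing R]
    (I : Ideal (MvPolynomial (Fin n) R)) (m : MvPolynomial (Fin n) R) (c : ℕ) :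
    Ideal.map (finSuccLastEquiv R n : MvPolynomial (Fin (n + 1)) R →+* _)
        (I.map (rename Fin.castSucc).toRingHom ⊔
          Ideal.span {X (Fin.last n) ^ c - rename Fin.castSucc m}) =
      I.map Polynomial.C ⊔ Ideal.span {Polynomial.X ^ c - Polynomial.C m} := by
  rw [Ideal.map_sup, Ideal.map_map, finSuccLastEquiv_comp_rename_castSucc, Ideal.map_span,
    Set.image_singleton]
  simp

end MvPolynomial

open MvPolynomial

theorem stmt_16_general (K : Type*) [Field K] (n : ℕ) (a : Fin n → ℕ)
    (c d : ℕ) (hc : 1 < c) (hcd : Nat.gcd c d = 1)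
    (lam : Fin n → ℕ) (hd : d = ∑ i, lam i * a i)
    (IL : Ideal (MvPolynomial (Fin n) K))
    (hIL : IL = RingHom.ker (MvPolynomial.aeval
        (fun i => Polynomial.X ^ a i : Fin n → Polynomial K)))
    (IH : Ideal (MvPolynomial (Fin (n + 1)) K))
    (hIH : IH = RingHom.ker (MvPolynomial.aeval
        (fun j => Polynomial.X ^ (Fin.lastCases d (fun i => c * a i) j) :
          Fin (n + 1) → Polynomial K)))
    (f : MvPolynomial (Fin (n + 1)) K)
    (hf : f = X (Fin.last n) ^ c - ∏ i, X (Fin.castSucc i) ^ lam i) :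
    IH = Ideal.map (MvPolynomial.rename (Fin.castSucc (n := n))).toRingHom IL ⊔
      Ideal.span {f} := by
  subst hIH hIL hf
  set φ := aeval (R := K) fun i : Fin n => (Polynomial.X ^ a i : Polynomial K)
  set ψ : MvPolynomial (Fin n) K →+* Polynomial K :=
    (Polynomial.expand K c : Polynomial K →+* Polynomial K).comp φ
  set m : MvPolynomial (Fin n) K := ∏ i, X i ^ lam i
  have hc0 : 0 < c := by omega
  have hψ : ∀ g N, ¬ c ∣ N → (ψ g).coeff N = 0 := fun g N hN => by
    simp [ψ, Polynomial.coeff_expand hc0, hN]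
  have hψm : ψ m = Polynomial.X ^ (d * c) := by
    simp [ψ, φ, m, hd, ← pow_mul, Finset.prod_pow_eq_pow_sum, Finset.mul_sum, mul_comm]
  have hψker : RingHom.ker ψ = RingHom.ker φ :=
    RingHom.ker_comp_of_injective _ (Polynomial.expand_injective hc0)
  have hcast : (aeval (R := K) ((fun j =>
      (Polynomial.X ^ (Fin.lastCases d (fun i => c * a i) j) : Polynomial K)) ∘
        Fin.castSucc)).toRingHom = ψ :=
    MvPolynomial.ringHom_ext (fun r => by simp [ψ]) (fun i => by simp [ψ, φ, ← pow_mul])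
  have hf : (X (Fin.last n) ^ c - ∏ i, X (Fin.castSucc i) ^ lam i :
      MvPolynomial (Fin (n + 1)) K) = X (Fin.last n) ^ c - rename Fin.castSucc m := by
    simp [m]
  rw [ker_aeval_eq_comap_finSuccLastEquiv, hcast, Fin.lastCases_last,
    Polynomial.ker_eval₂RingHom_X_pow ψ hc0 hcd hψ hψm, hψker, hf,
    ← map_finSuccLastEquiv_sup_span]
  exact Ideal.comap_map_of_bijective _ (finSuccLastEquiv K n).bijective

theorem stmt_16 (K : Type*) [Field K] (n : ℕ) (a : Fin n → ℕ)
    (hmono : StrictMono a) (hpos : ∀ i, 0 < a i)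
    (c d : ℕ) (hc : 1 < c) (hcd : Nat.gcd c d = 1)
    (lam : Fin n → ℕ) (hd : d = ∑ i, lam i * a i)
    (hmax : ∀ mu : Fin n → ℕ, d = ∑ i, mu i * a i → ∑ i, mu i ≤ ∑ i, lam i)
    (hdL : ∀ i, d ≠ a i)
    (IL : Ideal (MvPolynomial (Fin n) K))
    (hIL : IL = RingHom.ker (MvPolynomial.aeval
        (fun i => Polynomial.X ^ a i : Fin n → Polynomial K)))
    (IH : Ideal (MvPolynomial (Fin (n + 1)) K))
    (hIH : IH = RingHom.ker (MvPolynomial.aeval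
        (fun j => Polynomial.X ^ (Fin.lastCases d (fun i => c * a i) j) :
          Fin (n + 1) → Polynomial K)))
    (f : MvPolynomial (Fin (n + 1)) K)
    (hf : f = X (Fin.last n) ^ c - ∏ i, X (Fin.castSucc i) ^ lam i) :
    IH = Ideal.map (MvPolynomial.rename (Fin.castSucc (n := n))).toRingHom IL ⊔
      Ideal.span {f} :=
  stmt_16_general K n a c d hc hcd lam hd IL hIL IH hIH f hf
end

section
/- For the Backelin-type construction, given integers n ≥ 2 and r ≥ 3n + 2, set s = r(3n+2) + 3 and H = ⟨s, s+3, s+3n+1, s+3n+2⟩. Then the type of H satisfies type(H) ≥ 2n + 2. -/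
namespace Stmt18Aux

def Hgen (n s : ℕ) : Set ℕ :=
  {x | ∃ k₀ k₁ k₂ k₃ : ℕ,
      x = k₀ * s + k₁ * (s + 3) + k₂ * (s + 3 * n + 1) + k₃ * (s + 3 * n + 2)}

lemma hadd {n s a b : ℕ} (ha : a ∈ Hgen n s) (hb : b ∈ Hgen n s) : a + b ∈ Hgen n s := by
  obtain ⟨a0, a1, a2, a3, ha⟩ := ha
  obtain ⟨b0, b1, b2, b3, hb⟩ := hb
  exact ⟨a0 + b0, a1 + b1, a2 + b2, a3 + b3, by subst ha hb; ring⟩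

lemma memZ_add {n s b : ℕ} {y : ℤ} (hy : MemZ (Hgen n s) y) (hb : b ∈ Hgen n s) :
    MemZ (Hgen n s) (y + b) := by
  obtain ⟨N, hN, hc⟩ := hy
  exact ⟨N + b, hadd hN hb, by push_cast; omega⟩

lemma decomp {n s h : ℕ} (hh : h ∈ Hgen n s) (h0 : h ≠ 0) :
    ∃ g h', (g = s ∨ g = s + 3 ∨ g = s + 3 * n + 1 ∨ g = s + 3 * n + 2) ∧
      h' ∈ Hgen n s ∧ h = g + h' := by
  obtain ⟨k0, k1, k2, k3, he⟩ := hh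
  rcases k0 with _ | a
  · rcases k1 with _ | a
    · rcases k2 with _ | a
      · rcases k3 with _ | a
        · simp at he; exact absurd he h0
        · exact ⟨s + 3 * n + 2, 0 * s + 0 * (s + 3) + 0 * (s + 3 * n + 1) + a * (s + 3 * n + 2),
            by tauto, ⟨0, 0, 0, a, rfl⟩, by rw [he]; ring⟩
      · exact ⟨s + 3 * n + 1, 0 * s + 0 * (s + 3) + a * (s + 3 * n + 1) + k3 * (s + 3 * n + 2),
          by tauto, ⟨0, 0, a, k3, rfl⟩, by rw [he]; ring⟩
    · exact ⟨s + 3, 0 * s + a * (s + 3) + k2 * (s + 3 * n + 1) + k3 * (s + 3 * n + 2),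
        by tauto, ⟨0, a, k2, k3, rfl⟩, by rw [he]; ring⟩
  · exact ⟨s, a * s + k1 * (s + 3) + k2 * (s + 3 * n + 1) + k3 * (s + 3 * n + 2),
      by tauto, ⟨a, k1, k2, k3, rfl⟩, by rw [he]; ring⟩

lemma complete {n r s : ℕ} (hs : s = r * (3 * n + 2) + 3) (hr : 3 * n + 2 ≤ r)
    {N : ℕ} (hN : s * s + 3 * n + 2 ≤ N) : N ∈ Hgen n s := by
  have hs3 : 3 * n + 2 < s := by subst hs; nlinarith
  obtain ⟨a, haN⟩ : ∃ a, N = a + (3 * n + 2) := ⟨N - (3 * n + 2), by omega⟩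
  have has : s * s ≤ a := by omega
  have hrem : a % s + s * (a / s) = a := Nat.mod_add_div a s
  have hremlt : a % s < s := Nat.mod_lt _ (by omega)
  have hKs : s ≤ a / s := Nat.le_div_iff_mul_le (by omega) |>.mpr (by nlinarith)
  set K := a / s with hKdef
  set rem := a % s with hremdef
  have h3 : rem % 3 = 0 ∨ rem % 3 = 1 ∨ rem % 3 = 2 := by omega
  obtain ⟨m, hm⟩ : ∃ m, rem = 3 * m + rem % 3 := ⟨rem / 3, by omega⟩
  rcases h3 with h3 | h3 | h3
  · obtain ⟨k0, hk0⟩ : ∃ k0, K = k0 + (m + 1) := ⟨K - (m + 1), by omega⟩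
    refine ⟨k0, m, 0, 1, ?_⟩
    rw [haN, ← hrem, hk0, hm, h3]; ring
  · obtain ⟨k0, hk0⟩ : ∃ k0, K = k0 + (n + m + 1) := ⟨K - (n + m + 1), by omega⟩
    refine ⟨k0, n + m + 1, 0, 0, ?_⟩
    rw [haN, ← hrem, hk0, hm, h3]; ring
  · obtain ⟨k0, hk0⟩ : ∃ k0, K = k0 + (m + 2) := ⟨K - (m + 2), by omega⟩
    refine ⟨k0, m + 1, 1, 0, ?_⟩
    rw [haN, ← hrem, hk0, hm, h3]; ring

lemma pf_finite {n r s : ℕ} (hs : s = r * (3 * n + 2) + 3) (hr : 3 * n + 2 ≤ r) :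
    (PFZ (Hgen n s)).Finite := by
  apply Set.Finite.subset (Set.finite_Icc (-(s : ℤ)) ((s * s + 3 * n + 2 : ℕ) : ℤ))
  rintro x ⟨hx1, hx2⟩
  constructor
  · have hsH : s ∈ Hgen n s := ⟨1, 0, 0, 0, by ring⟩
    have hs0 : s ≠ 0 := by omega
    obtain ⟨N, _, hc⟩ := hx2 s hsH hs0
    have := Int.natCast_nonneg N
    omega
  · by_contra hlt
    push_neg at hlt
    apply hx1
    have hx0 : 0 ≤ x := le_trans (Int.natCast_nonneg _) (le_of_lt hlt)
    obtain ⟨N, hNx⟩ := Int.eq_ofNat_of_zero_le hx0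
    refine ⟨N, complete hs hr ?_, hNx.symm⟩
    have : ((s * s + 3 * n + 2 : ℕ) : ℤ) < (N : ℤ) := by rw [← hNx]; exact hlt
    exact_mod_cast le_of_lt this

lemma not_mem {n r s q b : ℕ} (hn : 2 ≤ n) (hr : 3 * n + 2 ≤ r) (hs : s = r * (3 * n + 2) + 3)
    (hq : q ≤ n) (hb : b ≤ 1) :
    ¬ MemZ (Hgen n s) (((r + 1) * s + 3 * q + b : ℕ) - 2 : ℤ) := by
  rintro ⟨N, ⟨k0, k1, k2, k3, hNe⟩, hc⟩
  have hsbig : 3 * n + 3 ≤ s := by subst hs; nlinarith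
  have heq : N + 2 = (r + 1) * s + 3 * q + b := by
    have h2 : (2 : ℤ) ≤ ((r + 1) * s + 3 * q + b : ℕ) := by
      have : s ≤ (r+1) * s := by nlinarith
      have : (2:ℕ) ≤ (r + 1) * s + 3 * q + b := by omega
      exact_mod_cast this
    have : (N : ℤ) + 2 = ((r + 1) * s + 3 * q + b : ℕ) := by linarith
    exact_mod_cast this
  rw [hNe] at heq
  have heq2 : (k0 + k1 + k2 + k3) * s + (3 * k1 + (3 * n + 1) * k2 + (3 * n + 2) * k3) + 2
      = (r + 1) * s + 3 * q + b := by
    rw [show (k0 + k1 + k2 + k3) * s + (3 * k1 + (3 * n + 1) * k2 + (3 * n + 2) * k3)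
      = k0 * s + k1 * (s + 3) + k2 * (s + 3 * n + 1) + k3 * (s + 3 * n + 2) from by ring]
    exact heq
  have htri : k0 + k1 + k2 + k3 ≤ r ∨ k0 + k1 + k2 + k3 = r + 1 ∨ r + 2 ≤ k0 + k1 + k2 + k3 := by
    omega
  rcases htri with hK | hK | hK
  · obtain ⟨δ, hδ⟩ : ∃ δ, r = (k0 + k1 + k2 + k3) + δ := ⟨r - (k0 + k1 + k2 + k3), by omega⟩
    have a1 : 3 * k1 ≤ (3 * n + 2) * k1 :=
      Nat.mul_le_mul (show 3 ≤ 3 * n + 2 by omega) (Nat.le_refl k1)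
    have a2 : (3 * n + 1) * k2 ≤ (3 * n + 2) * k2 :=
      Nat.mul_le_mul (show 3 * n + 1 ≤ 3 * n + 2 by omega) (Nat.le_refl k2)
    have a3 : 0 ≤ (3 * n + 2) * k0 := Nat.zero_le _
    have a4 : 0 ≤ (3 * n + 2) * δ := Nat.zero_le _
    have hse : s = ((k0 + k1 + k2 + k3) + δ) * (3 * n + 2) + 3 := by rw [hs, hδ]
    have hre : (r + 1) * s = (k0 + k1 + k2 + k3) * s + (δ + 1) * s := by rw [hδ]; ring
    rw [hre] at heq2
    have hcut : 3 * k1 + (3 * n + 1) * k2 + (3 * n + 2) * k3 + 2 = (δ + 1) * s + 3 * q + b :=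
      Nat.add_left_cancel (show (k0 + k1 + k2 + k3) * s
          + (3 * k1 + (3 * n + 1) * k2 + (3 * n + 2) * k3 + 2)
        = (k0 + k1 + k2 + k3) * s + ((δ + 1) * s + 3 * q + b) from by linarith)
    have e : ((k0 + k1 + k2 + k3) + δ) * (3 * n + 2)
        = (3 * n + 2) * k0 + (3 * n + 2) * k1 + (3 * n + 2) * k2 + (3 * n + 2) * k3
          + (3 * n + 2) * δ := by ring
    have hDle : 3 * k1 + (3 * n + 1) * k2 + (3 * n + 2) * k3 + 3 ≤ s := by
      linarith [a1, a2, a3, a4, hse, e]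
    have hs_le : s ≤ (δ + 1) * s := Nat.le_mul_of_pos_left s (by omega)
    linarith [hcut, hDle, hs_le]
  · have hre : (k0 + k1 + k2 + k3) * s = (r + 1) * s := by rw [hK]
    rw [hre] at heq2
    have hcancel : 3 * k1 + (3 * n + 1) * k2 + (3 * n + 2) * k3 + 2 = 3 * q + b :=
      Nat.add_left_cancel (show (r + 1) * s + (3 * k1 + (3 * n + 1) * k2 + (3 * n + 2) * k3 + 2)
        = (r + 1) * s + (3 * q + b) from by linarith)
    rcases Nat.eq_zero_or_pos k2 with hk2 | hk2
    · rcases Nat.eq_zero_or_pos k3 with hk3 | hk3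
      · subst hk2 hk3; simp at hcancel; omega
      · have : 3 * n + 2 ≤ (3 * n + 2) * k3 := Nat.le_mul_of_pos_right _ hk3
        omega
    · have : 3 * n + 1 ≤ (3 * n + 1) * k2 := Nat.le_mul_of_pos_right _ hk2
      omega
  · obtain ⟨δ, hδ⟩ : ∃ δ, k0 + k1 + k2 + k3 = (r + 2) + δ := ⟨k0 + k1 + k2 + k3 - (r + 2), by omega⟩
    rw [hδ] at heq2
    have hre : ((r + 2) + δ) * s = (r + 1) * s + s + δ * s := by ring
    rw [hre] at heq2
    have a5 : 0 ≤ δ * s := Nat.zero_le _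
    omega

lemma memZ_of_gen {n s : ℕ} (k0 k1 k2 k3 : ℕ) {x : ℤ}
    (hx : ((k0 * s + k1 * (s + 3) + k2 * (s + 3 * n + 1) + k3 * (s + 3 * n + 2) : ℕ) : ℤ) = x) :
    MemZ (Hgen n s) x :=
  ⟨_, ⟨k0, k1, k2, k3, rfl⟩, hx⟩

lemma mem_shift {n r s q b : ℕ} (hr : 3 * n + 2 ≤ r) (hs : s = r * (3 * n + 2) + 3)
    (hq : q ≤ n) (hb : b ≤ 1) (g : ℕ)
    (hg : g = s ∨ g = s + 3 ∨ g = s + 3 * n + 1 ∨ g = s + 3 * n + 2) :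
    MemZ (Hgen n s) ((((r + 1) * s + 3 * q + b : ℕ) : ℤ) - 2 + g) := by
  obtain ⟨ρ, hρ⟩ : ∃ ρ, r = 3 * n + 2 + ρ := ⟨r - (3 * n + 2), by omega⟩
  obtain ⟨ν, hν⟩ : ∃ ν, n = q + ν := ⟨n - q, by omega⟩
  interval_cases b
  · rcases hg with hg | hg | hg | hg
    · exact memZ_of_gen 0 0 (3 * ν + 1) (ρ + 2 + 3 * q)
        (by subst hg hs hρ hν; push_cast; ring)
    · rcases Nat.eq_zero_or_pos ν with hν0 | hν0
      · exact memZ_of_gen (r + 1) 0 1 0 (by subst hν0 hg hs hρ hν; push_cast; ring)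
      · obtain ⟨ν', hν'⟩ : ∃ ν', ν = ν' + 1 := ⟨ν - 1, by omega⟩
        exact memZ_of_gen 0 0 (3 * ν' + 1) (ρ + 5 + 3 * q)
          (by subst hg hs hρ hν hν'; push_cast; ring)
    · rcases Nat.eq_zero_or_pos q with hq0 | hq0
      · exact memZ_of_gen 0 0 0 (r + 1) (by subst hq0 hg hs hρ hν; push_cast; ring)
      · obtain ⟨q', hq'⟩ : ∃ q', q = q' + 1 := ⟨q - 1, by omega⟩
        exact memZ_of_gen (2 * n + 4 + ρ + ν) q' 0 1
          (by subst hg hs hρ hq'; push_cast;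
              rw [show (n : ℤ) = q' + 1 + ν by exact_mod_cast hν]; ring)
    · exact memZ_of_gen (n + 4 + ρ + ν) (q + n) 0 0
        (by subst hg hs hρ hν; push_cast; ring)
  · rcases hg with hg | hg | hg | hg
    · exact memZ_of_gen 0 0 (3 * ν) (ρ + 3 + 3 * q)
        (by subst hg hs hρ hν; push_cast; ring)
    · rcases Nat.eq_zero_or_pos ν with hν0 | hν0
      · exact memZ_of_gen (r + 1) 0 0 1 (by subst hν0 hg hs hρ hν; push_cast; ring)
      · obtain ⟨ν', hν'⟩ : ∃ ν', ν = ν' + 1 := ⟨ν - 1, by omega⟩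
        exact memZ_of_gen 0 0 (3 * ν') (ρ + 6 + 3 * q)
          (by subst hg hs hρ hν hν'; push_cast; ring)
    · exact memZ_of_gen (n + 4 + ρ + ν) (q + n) 0 0
        (by subst hg hs hρ hν; push_cast; ring)
    · exact memZ_of_gen (2 * n + 3 + ρ + ν) q 1 0
        (by subst hg hs hρ hν; push_cast; ring)

lemma pf_elt {n r s q b : ℕ} (hn : 2 ≤ n) (hr : 3 * n + 2 ≤ r) (hs : s = r * (3 * n + 2) + 3)
    (hq : q ≤ n) (hb : b ≤ 1) :
    ((((r + 1) * s + 3 * q + b : ℕ) : ℤ) - 2) ∈ PFZ (Hgen n s) := by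
  refine ⟨not_mem hn hr hs hq hb, fun h hh h0 => ?_⟩
  obtain ⟨g, h', hg, hh', hde⟩ := decomp hh h0
  have h2 := memZ_add (mem_shift hr hs hq hb g hg) hh'
  have he : ((((r + 1) * s + 3 * q + b : ℕ) : ℤ) - 2) + (h : ℤ)
      = ((((r + 1) * s + 3 * q + b : ℕ) : ℤ) - 2 + g) + (h' : ℤ) := by
    rw [hde]; push_cast; ring
  rw [he]; exact h2

end Stmt18Aux

theorem stmt_18 (n r s : ℕ) (hn : 2 ≤ n) (hr : 3 * n + 2 ≤ r)
    (hs : s = r * (3 * n + 2) + 3)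
    (H : Set ℕ)
    (hH : H = {x | ∃ k₀ k₁ k₂ k₃ : ℕ,
      x = k₀ * s + k₁ * (s + 3) + k₂ * (s + 3 * n + 1) + k₃ * (s + 3 * n + 2)}) :
    2 * n + 2 ≤ (PFZ H).ncard := by
  have hH' : H = Stmt18Aux.Hgen n s := hH
  subst hH'
  obtain ⟨A, hA⟩ : ∃ A, (r + 1) * s = A := ⟨_, rfl⟩
  set f : ℕ → ℤ := fun i => ((A + 3 * (i / 2) + i % 2 : ℕ) : ℤ) - 2 with hf
  have hsub : ↑((Finset.range (2 * n + 2)).image f) ⊆ PFZ (Stmt18Aux.Hgen n s) := by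
    intro x hx
    simp only [Finset.coe_image, Set.mem_image, Finset.mem_coe, Finset.mem_range] at hx
    obtain ⟨i, hi, rfl⟩ := hx
    have hq : i / 2 ≤ n := by omega
    have hb : i % 2 ≤ 1 := by omega
    have hxe : f i = (((r + 1) * s + 3 * (i / 2) + i % 2 : ℕ) : ℤ) - 2 := by
      rw [hf]; rw [hA]
    rw [hxe]
    exact Stmt18Aux.pf_elt hn hr hs hq hb
  have hfin : (PFZ (Stmt18Aux.Hgen n s)).Finite := Stmt18Aux.pf_finite hs hr
  have hinj : Set.InjOn f ↑(Finset.range (2 * n + 2)) := by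
    intro i _ j _ hij
    simp only [hf] at hij
    omega
  calc 2 * n + 2 = ((Finset.range (2 * n + 2)).image f).card := by
        rw [Finset.card_image_of_injOn hinj, Finset.card_range]
    _ = (↑((Finset.range (2 * n + 2)).image f) : Set ℤ).ncard := (Set.ncard_coe_finset _).symm
    _ ≤ (PFZ (Stmt18Aux.Hgen n s)).ncard := Set.ncard_le_ncard hsub hfin
end
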